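/- (Binomial decomposition of the multinomial) Let τ ≥ 1 and let P : {1,…,τ} → ℝ be a probability distribution, i.e. P(k) ≥ 0 for all k and ∑_{k=1}^{τ} P(k) = 1. Define the tail sums P̂(k) = ∑_{j=k}^{τ} P(j), assume P̂(k) > 0 for every k, and set Q(k) = P(k)/P̂(k). Fix a natural number N and counts n : {1,…,τ} → ℕ with ∑_{j=1}^{τ} n(j) = N, and define E(k) = N − ∑_{j=1}^{k-1} n(j), so E(1) = N. Then the multinomial probability mass function at n equals a product of binomial probability mass functions: (N! / ∏_{j=1}^{τ} n(j)!) · ∏_{j=1}^{τ} P(j)^{n(j)} = ∏_{k=1}^{τ} [ C(E(k), n(k)) · Q(k)^{n(k)} · (1 − Q(k))^{E(k) − n(k)} ], where C(m, r) denotes the binomial coefficient. -/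

import Mathlib

/-!
Writing `1 - Q k = P̂ (k+1) / P̂ k`, the binomial probabilities multiply to
`P̂ 1 ^ E 1 · ∏ P k ^ n k / P̂ (τ+1) ^ E (τ+1)` because the powers of the tail sums
telescope, and this is `∏ P k ^ n k` since `P̂ 1 = 1` and `E (τ+1) = 0`. Independently,
the binomial coefficients `C (E k, n k)` multiply to the multinomial coefficient
`N! / ∏ n k!`, since `E k! = C (E k, n k) · n k! · E (k+1)!`.
-/

open Finset Nat

theorem factorial_eq_factorial_mul_prod_choose_mul_factorial {e n : ℕ → ℕ} {a b : ℕ}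
    (hab : a ≤ b) (he : ∀ k ∈ Ico a b, e (k + 1) + n k = e k) :
    (e a)! = (e b)! * ∏ k ∈ Ico a b, (e k).choose (n k) * (n k)! := by
  induction b, hab using Nat.le_induction with
  | base => simp
  | succ b hab ih =>
    have hb : e (b + 1) + n b = e b := he b (by simp [hab])
    rw [ih fun k hk ↦ he k (Ico_subset_Ico_right b.le_succ hk), prod_Ico_succ_top hab,
      ← Nat.choose_mul_factorial_mul_factorial (show n b ≤ e b by omega),
      show e b - n b = e (b + 1) by omega]
    ring

theorem pow_mul_div_pow_mul_one_sub_div_pow {p t : ℝ} (h : p + t ≠ 0) {e m : ℕ}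
    (hm : m ≤ e) :
    (p + t) ^ e * ((p / (p + t)) ^ m * (1 - p / (p + t)) ^ (e - m)) = p ^ m * t ^ (e - m) := by
  have hsub : 1 - p / (p + t) = t / (p + t) := by field_simp; ring
  rw [hsub, div_pow, div_pow, ← Nat.add_sub_cancel' hm, pow_add, Nat.add_sub_cancel_left]
  field_simp

theorem pow_mul_prod_div_pow_mul_one_sub_div_pow {p s : ℕ → ℝ} {e n : ℕ → ℕ} {a b : ℕ}
    (hab : a ≤ b) (hs : ∀ k ∈ Ico a b, s k = p k + s (k + 1))
    (hs₀ : ∀ k ∈ Ico a b, s k ≠ 0) (he : ∀ k ∈ Ico a b, e (k + 1) + n k = e k) :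
    s a ^ e a * ∏ k ∈ Ico a b, (p k / s k) ^ n k * (1 - p k / s k) ^ (e k - n k) =
      s b ^ e b * ∏ k ∈ Ico a b, p k ^ n k := by
  induction b, hab using Nat.le_induction with
  | base => simp
  | succ b hab ih =>
    have hb : b ∈ Ico a (b + 1) := by simp [hab]
    have hsub : Ico a b ⊆ Ico a (b + 1) := Ico_subset_Ico_right b.le_succ
    have heb := he b hb
    have step :=
      pow_mul_div_pow_mul_one_sub_div_pow (hs b hb ▸ hs₀ b hb) (show n b ≤ e b by omega)
    rw [prod_Ico_succ_top hab, prod_Ico_succ_top hab, ← mul_assoc,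
      ih (fun k hk ↦ hs k (hsub hk)) (fun k hk ↦ hs₀ k (hsub hk))
        (fun k hk ↦ he k (hsub hk)),
      show e (b + 1) = e b - n b by omega, hs b hb]
    linear_combination (∏ k ∈ Ico a b, p k ^ n k) * step

theorem multinomial_binomial_decomposition_general
    (τ : ℕ)
    (P : ℕ → ℝ)
    (hsum : ∑ k ∈ Finset.Icc 1 τ, P k = 1)
    (Phat : ℕ → ℝ)
    (hPhat : ∀ k, Phat k = ∑ j ∈ Finset.Icc k τ, P j)
    (hpos : ∀ k ∈ Finset.Icc 1 τ, 0 < Phat k)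
    (Q : ℕ → ℝ)
    (hQ : ∀ k, Q k = P k / Phat k)
    (N : ℕ) (n : ℕ → ℕ)
    (hn : ∑ j ∈ Finset.Icc 1 τ, n j = N)
    (E : ℕ → ℕ)
    (hE : ∀ k, E k = N - ∑ j ∈ Finset.Ico 1 k, n j) :
    (N.factorial : ℝ) / (∏ j ∈ Finset.Icc 1 τ, ((n j).factorial : ℝ)) *
        ∏ j ∈ Finset.Icc 1 τ, P j ^ n j =
      ∏ k ∈ Finset.Icc 1 τ,
        (((E k).choose (n k) : ℝ) * Q k ^ n k * (1 - Q k) ^ (E k - n k)) := by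
  rw [← Ico_add_one_right_eq_Icc] at hn hsum hpos ⊢
  have hE_succ : ∀ k ∈ Ico 1 (τ + 1), E (k + 1) + n k = E k := fun k hk ↦ by
    rw [mem_Ico] at hk
    have hle : ∑ j ∈ Ico 1 (k + 1), n j ≤ N :=
      hn ▸ sum_le_sum_of_subset (Ico_subset_Ico_right (by omega))
    rw [sum_Ico_succ_top hk.1] at hle
    rw [hE, hE, sum_Ico_succ_top hk.1]
    omega
  have hPhat_succ : ∀ k ∈ Ico 1 (τ + 1), Phat k = P k + Phat (k + 1) := fun k hk ↦ by
    rw [hPhat, hPhat, ← Ico_add_one_right_eq_Icc, ← Ico_add_one_right_eq_Icc,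
      sum_eq_sum_Ico_succ_bot (by rw [mem_Ico] at hk; omega)]
  have hE_one : E 1 = N := by simp [hE]
  have hE_last : E (τ + 1) = 0 := by rw [hE, hn, Nat.sub_self]
  have hPhat_one : Phat 1 = 1 := by rw [hPhat, ← Ico_add_one_right_eq_Icc, hsum]
  have hchoose :=
    factorial_eq_factorial_mul_prod_choose_mul_factorial (Nat.le_add_left 1 τ) hE_succ
  have hweights := pow_mul_prod_div_pow_mul_one_sub_div_pow (Nat.le_add_left 1 τ) hPhat_succ
    (fun k hk ↦ (hpos k hk).ne') hE_succ
  rw [hE_one, hE_last, hPhat_one, one_pow, one_mul, pow_zero, one_mul] at hweights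
  rw [hE_one, hE_last, factorial_zero, one_mul, prod_mul_distrib] at hchoose
  simp_rw [hQ, mul_assoc]
  rw [prod_mul_distrib, hweights, hchoose]
  push_cast
  field_simp

/-- Binomial decomposition of the multinomial: the multinomial
probability mass function at counts `n` equals the product over `k` of the
`Binomial (E k) (Q k)` probability mass functions evaluated at `n k`, where
`E k = N - ∑_{j=1}^{k-1} n j` and `Q k = P k / P̂ k`. -/
theorem multinomial_binomial_decomposition
    (τ : ℕ) (hτ : 1 ≤ τ)
    (P : ℕ → ℝ)
    (hP : ∀ k ∈ Finset.Icc 1 τ, 0 ≤ P k)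
    (hsum : ∑ k ∈ Finset.Icc 1 τ, P k = 1)
    (Phat : ℕ → ℝ)
    (hPhat : ∀ k, Phat k = ∑ j ∈ Finset.Icc k τ, P j)
    (hpos : ∀ k ∈ Finset.Icc 1 τ, 0 < Phat k)
    (Q : ℕ → ℝ)
    (hQ : ∀ k, Q k = P k / Phat k)
    (N : ℕ) (n : ℕ → ℕ)
    (hn : ∑ j ∈ Finset.Icc 1 τ, n j = N)
    (E : ℕ → ℕ)
    (hE : ∀ k, E k = N - ∑ j ∈ Finset.Ico 1 k, n j) :
    (N.factorial : ℝ) / (∏ j ∈ Finset.Icc 1 τ, ((n j).factorial : ℝ)) *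
        ∏ j ∈ Finset.Icc 1 τ, P j ^ n j =
      ∏ k ∈ Finset.Icc 1 τ,
        (((E k).choose (n k) : ℝ) * Q k ^ n k * (1 - Q k) ^ (E k - n k)) :=
  multinomial_binomial_decomposition_general τ P hsum Phat hPhat hpos Q hQ N n hn E hE
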